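/- arXiv:math/0506542 — 3 statements merged into one kernel-verified Lean document; each statement's English description precedes it below -/
import Mathlib

section
/- For every commutative ring A, every family of weights R : ℤ → A, every integer a and every natural number k ≥ 1, the reflection relation Z_{a,a−1}(2k−1) = R_a · Z_{a−1,a}(2k−1) holds. -/
open Finset

variable {A : Type*} [CommRing A]

/-- End height of a walk starting at a given height, with steps given by a list of
Booleans (`true` = ascending step `+1`, `false` = descending step `-1`). -/
def walkEnd : ℤ → List Bool → ℤ
  | a, [] => a
  | a, true :: s => walkEnd (a + 1) s
  | a, false :: s => walkEnd (a - 1) s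

/-- Weight of a walk: the product of `R h` over all descending steps `h → h - 1`. -/
def walkWeight (R : ℤ → A) : ℤ → List Bool → A
  | _, [] => 1
  | a, true :: s => walkWeight R (a + 1) s
  | a, false :: s => R a * walkWeight R (a - 1) s

/-- Whether every height visited by the walk (including the first and last) is `≥ c`. -/
def walkAbove (c : ℤ) : ℤ → List Bool → Bool
  | a, [] => decide (c ≤ a)
  | a, true :: s => decide (c ≤ a) && walkAbove c (a + 1) s
  | a, false :: s => decide (c ≤ a) && walkAbove c (a - 1) s

/-- `Zw R a b k`: the generating function of walks of length `k` from height `a` to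
height `b`, each walk weighted by `R h` per descending step from height `h`. -/
def Zw (R : ℤ → A) (a b : ℤ) (k : ℕ) : A :=
  ∑ s : Fin k → Bool,
    if walkEnd a (List.ofFn s) = b then walkWeight R a (List.ofFn s) else 0

/-- `Zwp R a b k`: the same generating function, restricted to walks staying at
heights `≥ a` ("positive walks"). -/
def Zwp (R : ℤ → A) (a b : ℤ) (k : ℕ) : A :=
  ∑ s : Fin k → Bool,
    if walkEnd a (List.ofFn s) = b ∧ walkAbove a a (List.ofFn s) = true then
      walkWeight R a (List.ofFn s)
    else 0

/-- `Pdim R a b k`: hard-dimer partition function on the segment `[a,b]`: the sum over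
`k`-element subsets `S` of `{a+1, …, b}` with no two consecutive elements of
`∏ i in S, R i` (a dimer on `[i-1,i]` carries weight `R i`). -/
noncomputable def Pdim (R : ℤ → A) (a b : ℤ) (k : ℕ) : A :=
  ∑ S ∈ Finset.powersetCard k (Finset.Icc (a + 1) b),
    if ∀ i ∈ S, i + 1 ∉ S then ∏ i ∈ S, R i else 0

/-- `Vp R g m a b = Σ_{k=1}^{m} g_k • Zw R a b (2k-1)`: grand-canonical generating
function for walks of odd length from `a` to `b`. -/
def Vp (R : ℤ → A) (g : ℕ → A) (m : ℕ) (a b : ℤ) : A :=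
  ∑ k ∈ Finset.Icc 1 m, g k * Zw R a b (2 * k - 1)

/-- The conserved quantities `Γ_{2i}(n)`; `Gam R g m i n` stands for `Γ_{2i}(n)`. -/
def Gam (R : ℤ → A) (g : ℕ → A) (m : ℕ) (i : ℕ) (n : ℤ) : A :=
  if i = 0 then R (n - 1) - Vp R g m (n - 1) (n - 2) + (if n = 0 then 1 else 0)
  else
    Zwp R (n - 1) (n - 1) (2 * i) *
        (R (n - 1) - Vp R g m (n - 1) (n - 2) + (if n = 0 then 1 else 0)) -
      ∑ j ∈ Finset.Icc 1 i,
        Zwp R (n - 1) (n - 1 + 2 * (j : ℤ)) (2 * i) * Vp R g m (n + 2 * (j : ℤ) - 1) (n - 2)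

/-- The symmetric conserved quantities `Γ̃_{2i}(n)`; `Gamt R g m i n` stands
for `Γ̃_{2i}(n)`. -/
def Gamt (R : ℤ → A) (g : ℕ → A) (m : ℕ) (i : ℕ) (n : ℤ) : A :=
  if i = 0 then R n - Vp R g m n (n - 1)
  else
    (Zw R n (n - 1) (2 * i - 1) - R (n - 1) * R (n + 1) * Zw R (n - 2) (n + 1) (2 * i - 1)) *
        (R n - Vp R g m n (n - 1)) -
      ∑ j ∈ Finset.Icc 1 i,
        (Zw R (n - (j : ℤ)) (n + (j : ℤ) - 1) (2 * i - 1) -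
            R (n - (j : ℤ) - 1) * R (n + (j : ℤ) + 1) *
              Zw R (n - (j : ℤ) - 2) (n + (j : ℤ) + 1) (2 * i - 1)) *
          Vp R g m (n + (j : ℤ)) (n - (j : ℤ) - 1)

/-- The master equation: `R i = 0` for `i < 0` and `R n = 1 + V'_{n,n-1}` for `n ≥ 0`. -/
def MasterEq (R : ℤ → A) (g : ℕ → A) (m : ℕ) : Prop :=
  (∀ i : ℤ, i < 0 → R i = 0) ∧ ∀ n : ℤ, 0 ≤ n → R n = 1 + Vp R g m n (n - 1)

/-- `Zodd R a b i = Zw R a b (2i-1)`, with the convention that for `i = 0`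
(walks of length `-1`) it equals `1` if `b = a - 1` and `0` otherwise. -/
def Zodd (R : ℤ → A) (a b : ℤ) (i : ℕ) : A :=
  if i = 0 then (if b = a - 1 then 1 else 0) else Zw R a b (2 * i - 1)

/-- Binomial coefficient with an integer lower index, with the convention that it
vanishes for negative lower index. -/
def Cz (n : ℕ) (p : ℤ) : ℤ := if 0 ≤ p then n.choose p.toNat else 0

/-!
Reversing a walk and exchanging ascending with descending steps is a length-preserving
involution taking walks from `a` to `a - 1` to walks from `a - 1` to `a`. The descending steps
of the reversed walk start at the tops of the ascending steps of the original one, and a walk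
from `a` to `a - 1` crosses each level `h` downwards once more than upwards if `h = a`, and
equally often otherwise. So its weight is `R a` times that of its reversal.
-/

namespace Walk

/-- The steps of the reversed walk. -/
def reverseSteps (l : List Bool) : List Bool := (l.map (! ·)).reverse

/-- The starting heights of the descending steps. -/
def downTops : ℤ → List Bool → Multiset ℤ
  | _, [] => 0
  | a, true :: s => downTops (a + 1) s
  | a, false :: s => a ::ₘ downTops (a - 1) s

/-- The end heights of the ascending steps. -/
def upTops : ℤ → List Bool → Multiset ℤ
  | _, [] => 0
  | a, true :: s => (a + 1) ::ₘ upTops (a + 1) s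
  | a, false :: s => upTops (a - 1) s

theorem reverseSteps_cons (x : Bool) (s : List Bool) :
    reverseSteps (x :: s) = reverseSteps s ++ [!x] := by
  simp [reverseSteps]

theorem reverseSteps_involutive : Function.Involutive reverseSteps := by
  intro l
  simp [reverseSteps, Function.comp_def]

theorem walkEnd_append (a : ℤ) (s t : List Bool) :
    walkEnd a (s ++ t) = walkEnd (walkEnd a s) t := by
  induction s generalizing a with
  | nil => rfl
  | cons x s ih => cases x <;> simp [walkEnd, ih]

theorem downTops_append (a : ℤ) (s t : List Bool) :
    downTops a (s ++ t) = downTops a s + downTops (walkEnd a s) t := by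
  induction s generalizing a with
  | nil => simp [downTops, walkEnd]
  | cons x s ih => cases x <;> simp [downTops, walkEnd, ih]

theorem walkEnd_reverseSteps (a : ℤ) (s : List Bool) :
    walkEnd (walkEnd a s) (reverseSteps s) = a := by
  induction s generalizing a with
  | nil => rfl
  | cons x s ih => cases x <;> simp [walkEnd, reverseSteps_cons, walkEnd_append, ih]

theorem downTops_reverseSteps (a : ℤ) (s : List Bool) :
    downTops (walkEnd a s) (reverseSteps s) = upTops a s := by
  induction s generalizing a with
  | nil => rfl
  | cons x s ih =>
    cases x <;>
      simp [walkEnd, reverseSteps_cons, downTops_append, walkEnd_reverseSteps, ih, upTops,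
        downTops, add_comm]

theorem walkWeight_eq_prod_downTops (R : ℤ → A) (a : ℤ) (s : List Bool) :
    walkWeight R a s = ((downTops a s).map R).prod := by
  induction s generalizing a with
  | nil => simp [walkWeight, downTops]
  | cons x s ih => cases x <;> simp [walkWeight, downTops, ih]

/-- Level-crossing balance: a walk from `a` to `b` crosses from `h` to `h - 1` as often as from
`h - 1` to `h`, corrected by whether `h ≤ a` and whether `h ≤ b`. -/
theorem count_downTops_add (a : ℤ) (s : List Bool) (h : ℤ) :
    (downTops a s).count h + (if h ≤ walkEnd a s then 1 else 0) =
      (upTops a s).count h + (if h ≤ a then 1 else 0) := by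
  induction s generalizing a with
  | nil => simp [downTops, upTops, walkEnd]; rfl
  | cons x s ih =>
    cases x
    · have := ih (a - 1)
      rw [walkEnd]
      simp only [downTops, upTops, Multiset.count_cons] at this ⊢
      split_ifs at this ⊢ <;> omega
    · have := ih (a + 1)
      rw [walkEnd]
      simp only [downTops, upTops, Multiset.count_cons] at this ⊢
      split_ifs at this ⊢ <;> omega

theorem downTops_eq_cons_upTops {a : ℤ} {s : List Bool} (hs : walkEnd a s = a - 1) :
    downTops a s = a ::ₘ upTops a s := by
  ext h
  have := count_downTops_add a s h
  rw [hs] at this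
  rw [Multiset.count_cons]
  split_ifs at * <;> omega

theorem walkWeight_eq_mul_walkWeight_reverseSteps (R : ℤ → A) {a : ℤ} {s : List Bool}
    (hs : walkEnd a s = a - 1) :
    walkWeight R a s = R a * walkWeight R (a - 1) (reverseSteps s) := by
  rw [walkWeight_eq_prod_downTops, walkWeight_eq_prod_downTops, downTops_eq_cons_upTops hs,
    ← hs, downTops_reverseSteps, Multiset.map_cons, Multiset.prod_cons]

end Walk

open Walk

theorem List.ofFn_comp_rev {α : Type*} {n : ℕ} (f : Fin n → α) :
    List.ofFn (fun i => f i.rev) = (List.ofFn f).reverse := by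
  apply List.ext_getElem
  · simp
  · intro i h1 h2
    simp only [List.getElem_ofFn, List.getElem_reverse, Fin.rev]
    congr 1
    simp at h1 ⊢
    omega

theorem Zw_sub_one_eq_mul (R : ℤ → A) (a : ℤ) (n : ℕ) :
    Zw R a (a - 1) n = R a * Zw R (a - 1) a n := by
  let σ : (Fin n → Bool) → Fin n → Bool := fun s i => !s i.rev
  have hσ : Function.Involutive σ := fun s => funext fun i => by simp [σ]
  have hσ_ofFn (s : Fin n → Bool) : List.ofFn (σ s) = reverseSteps (List.ofFn s) := by
    rw [reverseSteps, List.map_ofFn, ← List.ofFn_comp_rev]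
    rfl
  rw [Zw, Zw, Finset.mul_sum]
  refine Fintype.sum_bijective σ hσ.bijective _ _ fun s => ?_
  rw [hσ_ofFn]
  by_cases hs : walkEnd a (List.ofFn s) = a - 1
  · have hrev : walkEnd (a - 1) (reverseSteps (List.ofFn s)) = a := by
      rw [← hs, walkEnd_reverseSteps]
    rw [if_pos hs, if_pos hrev, walkWeight_eq_mul_walkWeight_reverseSteps R hs]
  · have hrev : walkEnd (a - 1) (reverseSteps (List.ofFn s)) ≠ a := by
      intro h
      have := walkEnd_reverseSteps (a - 1) (reverseSteps (List.ofFn s))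
      rw [h, reverseSteps_involutive] at this
      exact hs this
    rw [if_neg hs, if_neg hrev, mul_zero]

theorem stmt_1_general {A : Type*} [CommRing A] (R : ℤ → A) (a : ℤ) (k : ℕ) :
    Zw R a (a - 1) (2 * k - 1) = R a * Zw R (a - 1) a (2 * k - 1) :=
  Zw_sub_one_eq_mul R a (2 * k - 1)

/-- the reflection relation `Z_{a,a-1}(2k-1) = R_a ⬝ Z_{a-1,a}(2k-1)`. -/
theorem stmt_1 {A : Type*} [CommRing A] (R : ℤ → A) (a : ℤ) (k : ℕ) (hk : 1 ≤ k) :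
    Zw R a (a - 1) (2 * k - 1) = R a * Zw R (a - 1) a (2 * k - 1) :=
  stmt_1_general R a k
end

section
/- For every commutative ring A, every family of weights R : ℤ → A, every integer a and all natural numbers j, k, the following inversion relation between hard-dimer partition functions and positive-walk generating functions holds: Σ_{ℓ=0}^{k} (−1)^{k−ℓ} · Π_{a,a+2k−1}(k−ℓ) · Z⁺_{a,a+2j}(2ℓ) = δ_{k,j}, where δ_{k,j} is 1 if k = j and 0 otherwise. -/
open Finset

variable {A : Type*} [CommRing A]

/-!
Put `p_k = ∑_l (-1)^(k-l) Π_{a,a+2k-1}(k-l) X^l` and let `L_j` be the linear functional on `A[X]`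
with `L_j (X^l) = Z⁺_{a,a+2j}(2l)`, so that the claim reads `L_j p_k = δ_{kj}`. Removing the last
two sites of the segment gives the three-term recurrence
`p_{k+2} = (X - b_{k+1}) p_{k+1} - c_{k+1} p_k`, and splitting off the last two steps of a positive
walk shows that multiplication by `X` acts on the `L_j` through the same Jacobi matrix:
`L_j (X q) = L_{j-1} q + b_j L_j q + c_{j+1} L_{j+1} q`, where `b_j = R_{a+2j} + R_{a+2j+1}`
(`b_0 = R_{a+1}`) and `c_j = R_{a+2j} R_{a+2j-1}`. The identity then follows by induction on
`k`, as for orthogonal polynomials and their moment functional.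
-/

open Polynomial

theorem apply_eq_ite_of_three_term_recurrence (b c : ℕ → A) (p : ℕ → A[X])
    (L : ℕ → A[X] →ₗ[A] A) (hp_zero : p 0 = 1) (hp_one : p 1 = X - C (b 0))
    (hp : ∀ k, p (k + 2) = (X - C (b (k + 1))) * p (k + 1) - C (c (k + 1)) * p k)
    (hL_zero_one : L 0 1 = 1) (hL_succ_one : ∀ j, L (j + 1) 1 = 0)
    (hL_zero_X : ∀ q, L 0 (X * q) = b 0 * L 0 q + c 1 * L 1 q)
    (hL_succ_X : ∀ j q,
      L (j + 1) (X * q) = L j q + b (j + 1) * L (j + 1) q + c (j + 2) * L (j + 2) q)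
    (k j : ℕ) : L j (p k) = if k = j then 1 else 0 := by
  have hL_C_mul (j : ℕ) (x : A) (q : A[X]) : L j (C x * q) = x * L j q := by
    rw [C_mul', map_smul, smul_eq_mul]
  have hL_one (j : ℕ) : L j 1 = if 0 = j then 1 else 0 := by
    cases j <;> simp [hL_zero_one, hL_succ_one]
  induction k using Nat.twoStepInduction generalizing j with
  | zero => rw [hp_zero, hL_one]
  | one =>
    rw [hp_one, ← mul_one X, ← mul_one (C (b 0)), map_sub, hL_C_mul]
    rcases j with _ | j
    · rw [hL_zero_X]
      simp [hL_one]
    · rw [hL_succ_X]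
      simp [hL_one, eq_comm]
  | more k ih₀ ih₁ =>
    rw [hp, sub_mul, map_sub, map_sub, hL_C_mul, hL_C_mul]
    rcases j with _ | j
    · rw [hL_zero_X]
      simp only [ih₀, ih₁]
      rcases k with _ | k <;> simp
    · rw [hL_succ_X]
      simp only [ih₀, ih₁]
      obtain rfl | rfl | rfl | ⟨h₁, h₂, h₃⟩ : j = k + 1 ∨ j = k ∨ k = j + 1 ∨
          (j ≠ k + 1 ∧ j ≠ k ∧ k ≠ j + 1) := by omega
      · simp [add_assoc]
      · simp
      · simp [add_assoc]
      · simp [h₁.symm, h₂.symm, h₃]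

theorem walkEnd_append (a : ℤ) (s t : List Bool) :
    walkEnd a (s ++ t) = walkEnd (walkEnd a s) t := by
  induction s generalizing a with
  | nil => rfl
  | cons x s ih => cases x <;> simp [walkEnd, ih]

theorem walkWeight_append (R : ℤ → A) (a : ℤ) (s t : List Bool) :
    walkWeight R a (s ++ t) = walkWeight R a s * walkWeight R (walkEnd a s) t := by
  induction s generalizing a with
  | nil => simp [walkWeight, walkEnd]
  | cons x s ih => cases x <;> simp [walkWeight, walkEnd, ih, mul_assoc]

theorem walkAbove_append (c a : ℤ) (s t : List Bool) :
    walkAbove c a (s ++ t) = (walkAbove c a s && walkAbove c (walkEnd a s) t) := by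
  induction s generalizing a with
  | nil =>
    simp only [List.nil_append, walkEnd]
    cases t with
    | nil => rw [Bool.and_self]
    | cons y t => cases y <;> simp only [walkAbove, ← Bool.and_assoc, Bool.and_self]
  | cons x s ih => cases x <;> simp [walkAbove, walkEnd, ih, Bool.and_assoc]

theorem le_walkEnd_of_walkAbove {c a : ℤ} {s : List Bool} (h : walkAbove c a s = true) :
    c ≤ walkEnd a s := by
  induction s generalizing a with
  | nil => simpa [walkAbove, walkEnd] using h
  | cons x s ih =>
    cases x <;> simp only [walkAbove, walkEnd, Bool.and_eq_true] at h ⊢ <;> exact ih h.2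

theorem sum_pi_fin_succ_bool {M : Type*} [AddCommMonoid M] {n : ℕ}
    (f : (Fin (n + 1) → Bool) → M) :
    ∑ s, f s = ∑ s : Fin n → Bool, (f (Fin.snoc s true) + f (Fin.snoc s false)) := by
  rw [← (Fin.snocEquiv fun _ => Bool).sum_comp, Fintype.sum_prod_type_right]
  simp [Fin.snocEquiv]

theorem Zwp_of_lt (R : ℤ → A) {a b : ℤ} (k : ℕ) (h : b < a) : Zwp R a b k = 0 :=
  Finset.sum_eq_zero fun _ _ =>
    if_neg fun ⟨hend, habove⟩ => (le_walkEnd_of_walkAbove habove).not_gt (hend ▸ h)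

theorem Zwp_zero (R : ℤ → A) (a b : ℤ) : Zwp R a b 0 = if a = b then 1 else 0 := by
  simp [Zwp, walkEnd, walkAbove, walkWeight]

theorem Zwp_succ (R : ℤ → A) {a b : ℤ} (h : a ≤ b) (n : ℕ) :
    Zwp R a b (n + 1) = Zwp R a (b - 1) n + R (b + 1) * Zwp R a (b + 1) n := by
  simp only [Zwp, sum_pi_fin_succ_bool, Finset.sum_add_distrib, Finset.mul_sum]
  congr 1 <;> refine Finset.sum_congr rfl fun s _ => ?_ <;>
    simp only [List.ofFn_succ', Fin.snoc_castSucc, Fin.snoc_last, List.concat_eq_append,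
      walkEnd_append, walkWeight_append, walkAbove_append, walkEnd, walkWeight, walkAbove]
  all_goals
    have hle := @le_walkEnd_of_walkAbove a a (List.ofFn s)
    simp only [Bool.and_eq_true, decide_eq_true_eq, mul_one]
    split_ifs <;> grind

theorem forall_add_one_notMem_insert_iff {x : ℤ} {T : Finset ℤ} :
    (∀ i ∈ insert x T, i + 1 ∉ insert x T) ↔
      x + 1 ∉ T ∧ x - 1 ∉ T ∧ ∀ i ∈ T, i + 1 ∉ T := by
  simp only [Finset.mem_insert, forall_eq_or_imp, not_or]
  constructor
  · rintro ⟨⟨-, hx⟩, hT⟩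
    refine ⟨hx, fun h => (hT _ h).1 (by ring), fun i hi => (hT i hi).2⟩
  · rintro ⟨hx, hx', hT⟩
    refine ⟨⟨by omega, hx⟩, fun i hi => ⟨fun h => hx' ?_, hT i hi⟩⟩
    rwa [← h, add_sub_cancel_right]

theorem Pdim_zero (R : ℤ → A) (a b : ℤ) : Pdim R a b 0 = 1 := by
  simp [Pdim]

theorem Pdim_succ_eq_zero (R : ℤ → A) {a b : ℤ} {m : ℕ} (h : b ≤ a + 2 * m) :
    Pdim R a b (m + 1) = 0 := by
  refine Finset.sum_eq_zero fun S hS => if_neg fun hS_sep => ?_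
  rw [Finset.mem_powersetCard] at hS
  have hS_Icc (i : ℤ) (hi : i ∈ S) : a + 1 ≤ i ∧ i ≤ b := Finset.mem_Icc.1 (hS.1 hi)
  -- two elements of `S` in the same block `{a + 2t + 1, a + 2t + 2}` are consecutive
  obtain ⟨x, hx, y, hy, hxy, hblock⟩ :=
    Finset.exists_ne_map_eq_of_card_lt_of_maps_to (s := S) (t := Finset.range m)
      (f := fun i => ((i - (a + 1)) / 2).toNat) (by simp [hS.2])
      fun i hi => by
        have := hS_Icc i hi
        simp only [Finset.mem_coe, Finset.mem_range]
        omega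
  have := hS_Icc x hx
  have := hS_Icc y hy
  obtain rfl | rfl : x = y + 1 ∨ y = x + 1 := by omega
  · exact hS_sep y hy hx
  · exact hS_sep x hx hy

theorem Pdim_succ_succ (R : ℤ → A) {a b : ℤ} (h : a ≤ b) (m : ℕ) :
    Pdim R a (b + 1) (m + 1) = Pdim R a b (m + 1) + R (b + 1) * Pdim R a (b - 1) m := by
  have hb : b + 1 ∉ Finset.Icc (a + 1) b := by simp
  have hb_T {n : ℕ} {T : Finset ℤ} (hT : T ∈ Finset.powersetCard n (Finset.Icc (a + 1) b)) :
      b + 1 ∉ T := fun hbT => hb ((Finset.mem_powersetCard.1 hT).1 hbT)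
  have hfilter : (Finset.powersetCard m (Finset.Icc (a + 1) b)).filter (fun T => b ∉ T) =
      Finset.powersetCard m (Finset.Icc (a + 1) (b - 1)) := by
    ext T
    simp only [Finset.mem_filter, Finset.mem_powersetCard, Finset.subset_iff, Finset.mem_Icc]
    constructor
    · rintro ⟨⟨hT, hcard⟩, hbT⟩
      refine ⟨fun i hi => ⟨(hT hi).1, ?_⟩, hcard⟩
      have hib : i ≠ b := fun hib => hbT (hib ▸ hi)
      have := (hT hi).2
      omega
    · rintro ⟨hT, hcard⟩
      exact ⟨⟨fun i hi => ⟨(hT hi).1, by linarith [(hT hi).2]⟩, hcard⟩,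
        fun hbT => by linarith [(hT hbT).2]⟩
  rw [Pdim, ← Finset.insert_Icc_right_eq_Icc_add_one (by omega),
    Finset.powersetCard_succ_insert hb, Finset.sum_union, Finset.sum_image]
  · rw [Pdim, Pdim, Finset.mul_sum, ← hfilter, Finset.sum_filter]
    congr 1
    refine Finset.sum_congr rfl fun T hT => ?_
    have hb2 : b + 1 + 1 ∉ T := fun hbT => by
      have := Finset.mem_Icc.1 ((Finset.mem_powersetCard.1 hT).1 hbT)
      omega
    rw [if_congr forall_add_one_notMem_insert_iff rfl rfl, Finset.prod_insert (hb_T hT),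
      add_sub_cancel_right]
    by_cases hbT : b ∈ T <;> simp [hbT, hb2, mul_ite]
  · intro T hT U hU hTU
    rw [← Finset.erase_insert (hb_T hT), hTU, Finset.erase_insert (hb_T hU)]
  · refine Finset.disjoint_left.2 fun T hT hT' => ?_
    obtain ⟨U, -, rfl⟩ := Finset.mem_image.1 hT'
    exact hb_T hT (Finset.mem_insert_self _ _)

theorem Pdim_two_step_one (R : ℤ → A) {a c : ℤ} (h : a < c) :
    Pdim R a (c + 1) 1 = Pdim R a (c - 1) 1 + (R c + R (c + 1)) := by
  have h₁ := Pdim_succ_succ R (a := a) (b := c) h.le 0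
  have h₂ := Pdim_succ_succ R (a := a) (b := c - 1) (by omega) 0
  rw [sub_add_cancel] at h₂
  rw [h₁, h₂, Pdim_zero, Pdim_zero]
  ring

theorem Pdim_two_step (R : ℤ → A) {a c : ℤ} (h : a + 1 < c) (m : ℕ) :
    Pdim R a (c + 1) (m + 2) =
      Pdim R a (c - 1) (m + 2) + (R c + R (c + 1)) * Pdim R a (c - 1) (m + 1)
        - R c * R (c - 1) * Pdim R a (c - 3) m := by
  have h₁ := Pdim_succ_succ R (a := a) (b := c) (by omega) (m + 1)
  have h₂ := Pdim_succ_succ R (a := a) (b := c - 1) (by omega) (m + 1)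
  have h₃ := Pdim_succ_succ R (a := a) (b := c - 2) (by omega) m
  ring_nf at h₁ h₂ h₃ ⊢
  linear_combination h₁ + h₂ - R c * h₃

theorem Zwp_self_add_two (R : ℤ → A) (a : ℤ) (n : ℕ) :
    Zwp R a a (n + 2) = R (a + 1) * Zwp R a a n + R (a + 2) * R (a + 1) * Zwp R a (a + 2) n := by
  have h₁ := Zwp_succ R (le_refl a) (n + 1)
  have h₂ := Zwp_succ R (by omega : a ≤ a + 1) n
  rw [Zwp_of_lt R _ (by omega : a - 1 < a)] at h₁
  rw [add_sub_cancel_right, add_assoc, one_add_one_eq_two] at h₂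
  linear_combination h₁ + R (a + 1) * h₂

theorem Zwp_add_two (R : ℤ → A) {a b : ℤ} (h : a < b) (n : ℕ) :
    Zwp R a b (n + 2) = Zwp R a (b - 2) n + (R b + R (b + 1)) * Zwp R a b n
      + R (b + 2) * R (b + 1) * Zwp R a (b + 2) n := by
  have h₁ := Zwp_succ R h.le (n + 1)
  have h₂ := Zwp_succ R (by omega : a ≤ b - 1) n
  have h₃ := Zwp_succ R (by omega : a ≤ b + 1) n
  rw [sub_sub, one_add_one_eq_two, sub_add_cancel] at h₂
  rw [add_sub_cancel_right, add_assoc, one_add_one_eq_two] at h₃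
  linear_combination h₁ + h₂ + R (b + 1) * h₃

-- A positive walk cannot step down from height `a`, hence no `R a` term in `b_0`.
def jacobiDiag (R : ℤ → A) (a : ℤ) : ℕ → A
  | 0 => R (a + 1)
  | k + 1 => R (a + 2 * (k + 1 : ℕ)) + R (a + 2 * (k + 1 : ℕ) + 1)

def jacobiOffDiag (R : ℤ → A) (a : ℤ) (k : ℕ) : A :=
  R (a + 2 * k) * R (a + 2 * k - 1)

noncomputable def dimerPoly (R : ℤ → A) (a : ℤ) (k : ℕ) : A[X] :=
  ∑ l ∈ Finset.range (k + 1), monomial l ((-1) ^ (k - l) * Pdim R a (a + 2 * k - 1) (k - l))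

noncomputable def walkMoments (R : ℤ → A) (a : ℤ) (j : ℕ) : A[X] →ₗ[A] A :=
  lsum fun n => LinearMap.mulRight A (Zwp R a (a + 2 * j) (2 * n))

theorem coeff_dimerPoly (R : ℤ → A) (a : ℤ) (k n : ℕ) :
    (dimerPoly R a k).coeff n =
      if n ≤ k then (-1) ^ (k - n) * Pdim R a (a + 2 * k - 1) (k - n) else 0 := by
  simp [dimerPoly, coeff_monomial]

theorem coeff_dimerPoly_of_add {R : ℤ → A} {a : ℤ} {k n m : ℕ} (h : n + m = k) :
    (dimerPoly R a k).coeff n = (-1) ^ m * Pdim R a (a + 2 * k - 1) m := by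
  rw [coeff_dimerPoly, if_pos (by omega), show k - n = m by omega]

theorem coeff_dimerPoly_of_lt {R : ℤ → A} {a : ℤ} {k n : ℕ} (h : k < n) :
    (dimerPoly R a k).coeff n = 0 := by
  rw [coeff_dimerPoly, if_neg (by omega)]

theorem dimerPoly_zero (R : ℤ → A) (a : ℤ) : dimerPoly R a 0 = 1 := by
  simp [dimerPoly, Pdim_zero]

theorem dimerPoly_one (R : ℤ → A) (a : ℤ) : dimerPoly R a 1 = X - C (jacobiDiag R a 0) := by
  have h : Pdim R a (a + 2 - 1) 1 = R (a + 1) := by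
    rw [show a + 2 - 1 = a + 1 by ring, Pdim_succ_succ R (le_refl a),
      Pdim_succ_eq_zero R (b := a) (m := 0) (by omega), Pdim_zero, zero_add, mul_one]
  ext (_ | _ | n) <;> simp [coeff_dimerPoly, coeff_X, coeff_C, jacobiDiag, h, Pdim_zero]

theorem dimerPoly_add_two (R : ℤ → A) (a : ℤ) (k : ℕ) :
    dimerPoly R a (k + 2) = (X - C (jacobiDiag R a (k + 1))) * dimerPoly R a (k + 1)
      - C (jacobiOffDiag R a (k + 1)) * dimerPoly R a k := by
  set c : ℤ := a + 2 * (k + 1 : ℕ) with hc_def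
  have hc : a + 1 < c := by omega
  have hk₂ : a + 2 * (k + 2 : ℕ) - 1 = c + 1 := by push_cast [c]; ring
  have hk₁ : a + 2 * (k + 1 : ℕ) - 1 = c - 1 := rfl
  have hk₀ : a + 2 * k - 1 = c - 3 := by push_cast [c]; ring
  have hdiag : jacobiDiag R a (k + 1) = R c + R (c + 1) := rfl
  have hoff : jacobiOffDiag R a (k + 1) = R c * R (c - 1) := rfl
  ext (_ | n)
  · simp only [coeff_sub, mul_coeff_zero, coeff_C_zero, coeff_X_zero]
    rw [coeff_dimerPoly_of_add (zero_add _), coeff_dimerPoly_of_add (zero_add _),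
      coeff_dimerPoly_of_add (zero_add _), hk₂, hk₁, hk₀, hdiag, hoff, Pdim_two_step R hc,
      Pdim_succ_eq_zero R (by omega)]
    ring
  · simp only [coeff_sub, sub_mul, coeff_X_mul, coeff_C_mul, hdiag, hoff]
    rcases le_or_gt (n + 1) k with hnk | hnk
    · obtain ⟨m, rfl⟩ := Nat.exists_eq_add_of_le hnk
      rw [coeff_dimerPoly_of_add (k := n + 1 + m + 2) (m := m + 2) (by omega),
        coeff_dimerPoly_of_add (k := n + 1 + m + 1) (n := n) (m := m + 2) (by omega),
        coeff_dimerPoly_of_add (k := n + 1 + m + 1) (m := m + 1) (by omega),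
        coeff_dimerPoly_of_add (k := n + 1 + m) (m := m) rfl,
        hk₂, hk₁, hk₀, Pdim_two_step R hc]
      ring
    · obtain rfl | rfl | hkn : n = k ∨ n = k + 1 ∨ k + 1 < n := by omega
      · rw [coeff_dimerPoly_of_add (k := n + 2) (m := 1) rfl,
          coeff_dimerPoly_of_add (k := n + 1) (n := n) (m := 1) rfl,
          coeff_dimerPoly_of_add (k := n + 1) (m := 0) rfl,
          coeff_dimerPoly_of_lt (Nat.lt_succ_self n),
          hk₂, hk₁, Pdim_two_step_one R (by omega), Pdim_zero]
        ring
      · rw [coeff_dimerPoly_of_add (k := k + 2) (m := 0) rfl,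
          coeff_dimerPoly_of_add (k := k + 1) (n := k + 1) (m := 0) rfl,
          coeff_dimerPoly_of_lt (Nat.lt_succ_self _), coeff_dimerPoly_of_lt (by omega), Pdim_zero,
          Pdim_zero]
        ring
      · rw [coeff_dimerPoly_of_lt (by omega), coeff_dimerPoly_of_lt (by omega),
          coeff_dimerPoly_of_lt (by omega), coeff_dimerPoly_of_lt (by omega)]
        ring

theorem walkMoments_monomial (R : ℤ → A) (a : ℤ) (j n : ℕ) (x : A) :
    walkMoments R a j (monomial n x) = x * Zwp R a (a + 2 * j) (2 * n) := by
  simp [walkMoments]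

theorem walkMoments_one (R : ℤ → A) (a : ℤ) (j : ℕ) :
    walkMoments R a j 1 = if j = 0 then 1 else 0 := by
  rw [← monomial_zero_one, walkMoments_monomial, Zwp_zero]
  simp

theorem walkMoments_zero_X_mul (R : ℤ → A) (a : ℤ) (q : A[X]) :
    walkMoments R a 0 (X * q) =
      jacobiDiag R a 0 * walkMoments R a 0 q + jacobiOffDiag R a 1 * walkMoments R a 1 q := by
  induction q using Polynomial.induction_on' with
  | add p q hp hq => simp only [mul_add, map_add, hp, hq]; ring
  | monomial n x =>
    simp only [X_mul_monomial, walkMoments_monomial, mul_add, mul_one, Nat.cast_zero, mul_zero,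
      add_zero, Nat.cast_one, Zwp_self_add_two, jacobiDiag, jacobiOffDiag]
    ring_nf

theorem walkMoments_succ_X_mul (R : ℤ → A) (a : ℤ) (j : ℕ) (q : A[X]) :
    walkMoments R a (j + 1) (X * q) = walkMoments R a j q
      + jacobiDiag R a (j + 1) * walkMoments R a (j + 1) q
      + jacobiOffDiag R a (j + 2) * walkMoments R a (j + 2) q := by
  induction q using Polynomial.induction_on' with
  | add p q hp hq => simp only [mul_add, map_add, hp, hq]; ring
  | monomial n x =>
    set b : ℤ := a + 2 * (j + 1 : ℕ) with hb_def
    have hj₀ : a + 2 * j = b - 2 := by push_cast [b]; ring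
    have hj₂ : a + 2 * (j + 2 : ℕ) = b + 2 := by push_cast [b]; ring
    have hdiag : jacobiDiag R a (j + 1) = R b + R (b + 1) := rfl
    have hoff : jacobiOffDiag R a (j + 2) = R (b + 2) * R (b + 1) := by
      rw [jacobiOffDiag, hj₂, add_sub_assoc]
      norm_num
    rw [X_mul_monomial, walkMoments_monomial, walkMoments_monomial, walkMoments_monomial,
      walkMoments_monomial, hj₀, hj₂, hdiag, hoff, mul_add, mul_one,
      Zwp_add_two R (by omega : a < b)]
    ring

/-- inversion relation between hard-dimer partition functions and
positive-walk generating functions. -/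
theorem stmt_4 {A : Type*} [CommRing A] (R : ℤ → A) (a : ℤ) (j k : ℕ) :
    ∑ l ∈ Finset.range (k + 1),
        (-1 : A) ^ (k - l) * Pdim R a (a + 2 * (k : ℤ) - 1) (k - l) *
          Zwp R a (a + 2 * (j : ℤ)) (2 * l) =
      if k = j then 1 else 0 := by
  have h := apply_eq_ite_of_three_term_recurrence (jacobiDiag R a) (jacobiOffDiag R a)
    (dimerPoly R a) (walkMoments R a) (dimerPoly_zero R a) (dimerPoly_one R a)
    (dimerPoly_add_two R a) (by simp [walkMoments_one]) (fun _ => by simp [walkMoments_one])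
    (walkMoments_zero_X_mul R a) (walkMoments_succ_X_mul R a) k j
  rw [← h, dimerPoly, map_sum]
  simp only [walkMoments_monomial]
end

section
/- For all natural numbers i and j, the binomial identity Σ_{ℓ=0}^{i} C(2ℓ, ℓ) · (C(2i−2ℓ, i−ℓ−j) − C(2i−2ℓ, i−ℓ−j−1)) = C(2i+1, i−j) holds, where C(n,p) denotes the binomial coefficient with the convention C(n,p) = 0 for p < 0 or p > n. -/
open Finset

variable {A : Type*} [CommRing A]

/-!
With `ballot m j = C(2m, m-j) - C(2m, m-j-1)`, Pascal's rule applied twice gives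
`ballot (m+1) j = ballot m (j-1) + 2 ballot m j + ballot m (j+1)`, and the right-hand side
`C(2i+1, i-j)` satisfies the same recurrence in `i`, so the identity follows by induction on `i`.
The convolution with `C(2l, l)` picks up an extra term `C(2i+2, i+1) · ballot 0 j`, nonzero only
at `j = 0`, where the recurrence also reaches `j = -1`; that value is recovered from the
reflection `ballot m (-1) = -ballot m 0`, i.e. from `C(2m, m+1) = C(2m, m-1)`.
-/

open Finset

lemma Cz_of_neg (n : ℕ) {p : ℤ} (hp : p < 0) : Cz n p = 0 := by
  simp [Cz, hp.not_ge]

lemma Cz_succ (n : ℕ) (p : ℤ) : Cz (n + 1) p = Cz n p + Cz n (p - 1) := by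
  rcases lt_trichotomy p 0 with hp | rfl | hp
  · simp [Cz_of_neg _ hp, Cz_of_neg _ (show p - 1 < 0 by omega)]
  · simp [Cz]
  · obtain ⟨k, rfl⟩ : ∃ k : ℕ, p = k + 1 := ⟨p.toNat - 1, by omega⟩
    simp only [Cz, show (0 : ℤ) ≤ k + 1 by omega, show (0 : ℤ) ≤ k + 1 - 1 by omega, if_true,
      show ((k : ℤ) + 1).toNat = k + 1 by omega, show ((k : ℤ) + 1 - 1).toNat = k by omega,
      Nat.choose_succ_succ', Nat.cast_add]
    ring

lemma Cz_add_two (n : ℕ) (p : ℤ) :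
    Cz (n + 2) p = Cz n p + 2 * Cz n (p - 1) + Cz n (p - 2) := by
  rw [Cz_succ, Cz_succ, Cz_succ, show p - 1 - 1 = p - 2 by ring]
  ring

lemma Cz_symm (n : ℕ) (p : ℤ) : Cz n (n - p) = Cz n p := by
  rcases lt_or_ge p 0 with hp | hp
  · rw [Cz_of_neg _ hp, Cz, if_pos (by omega), Nat.choose_eq_zero_of_lt (by omega), Nat.cast_zero]
  rcases lt_or_ge (n : ℤ) p with hpn | hpn
  · rw [Cz_of_neg _ (by omega), Cz, if_pos hp, Nat.choose_eq_zero_of_lt (by omega), Nat.cast_zero]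
  rw [Cz, Cz, if_pos (by omega), if_pos hp, show (n - p).toNat = n - p.toNat by omega,
    Nat.choose_symm (by omega)]

lemma Cz_two_mul_self (n : ℕ) : Cz (2 * n) n = n.centralBinom := by
  simp [Cz, Nat.centralBinom_eq_two_mul_choose]

def ballot (m : ℕ) (j : ℤ) : ℤ := Cz (2 * m) (m - j) - Cz (2 * m) (m - j - 1)

lemma ballot_succ (m : ℕ) (j : ℤ) :
    ballot (m + 1) j = ballot m (j - 1) + 2 * ballot m j + ballot m (j + 1) := by
  simp only [ballot, show 2 * (m + 1) = 2 * m + 2 by ring, Cz_add_two, Nat.cast_add, Nat.cast_one]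
  ring_nf

lemma ballot_zero_zero : ballot 0 0 = 1 := by
  simp [ballot, Cz]

lemma ballot_zero_of_pos {j : ℤ} (hj : 0 < j) : ballot 0 j = 0 := by
  simp [ballot, Cz_of_neg _ (show -j < 0 by omega), Cz_of_neg _ (show -j - 1 < 0 by omega)]

lemma ballot_neg_one (m : ℕ) : ballot m (-1) = -ballot m 0 := by
  have h : Cz (2 * m) (m + 1) = Cz (2 * m) (m - 1) := by
    rw [← Cz_symm _ (m - 1)]
    push_cast
    ring_nf
  simp only [ballot, sub_neg_eq_add, add_sub_cancel_right, sub_zero, h]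
  ring

def centralBinomConvBallot (i : ℕ) (j : ℤ) : ℤ :=
  ∑ p ∈ antidiagonal i, (p.1.centralBinom : ℤ) * ballot p.2 j

lemma centralBinomConvBallot_succ (i : ℕ) (j : ℤ) :
    centralBinomConvBallot (i + 1) j =
      (i + 1).centralBinom * ballot 0 j + centralBinomConvBallot i (j - 1) +
        2 * centralBinomConvBallot i j + centralBinomConvBallot i (j + 1) := by
  simp only [centralBinomConvBallot, Nat.sum_antidiagonal_succ', ballot_succ, mul_add,
    sum_add_distrib, mul_left_comm _ (2 : ℤ), ← mul_sum]
  ring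

lemma centralBinomConvBallot_neg_one (i : ℕ) :
    centralBinomConvBallot i (-1) = -centralBinomConvBallot i 0 := by
  simp only [centralBinomConvBallot, ballot_neg_one, mul_neg, sum_neg_distrib]

theorem centralBinomConvBallot_eq (i : ℕ) {j : ℤ} (hj : 0 ≤ j) :
    centralBinomConvBallot i j = Cz (2 * i + 1) (i - j) := by
  induction i generalizing j with
  | zero =>
    rcases hj.eq_or_lt with rfl | hj
    · simp [centralBinomConvBallot, ballot_zero_zero, Cz]
    · simp [centralBinomConvBallot, ballot_zero_of_pos hj, Cz_of_neg _ (show -j < 0 by omega)]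
  | succ i ih =>
    rw [centralBinomConvBallot_succ]
    rcases hj.eq_or_lt with rfl | hj
    · have pascal_top := Cz_succ (2 * (i + 1)) (i + 1)
      have pascal_mid := Cz_succ (2 * i + 1) i
      rw [zero_sub, zero_add, centralBinomConvBallot_neg_one, ih le_rfl, ih zero_le_one,
        ballot_zero_zero, ← Cz_two_mul_self]
      push_cast at pascal_top pascal_mid ⊢
      ring_nf at pascal_top pascal_mid ⊢
      linear_combination -pascal_top - pascal_mid
    · rw [ih (by omega), ih hj.le, ih (by omega), ballot_zero_of_pos hj,
        show 2 * (i + 1) + 1 = (2 * i + 1) + 2 by ring, Cz_add_two]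
      push_cast
      ring_nf

/-- the binomial identity
`Σ_{ℓ=0}^{i} C(2ℓ,ℓ)(C(2i-2ℓ,i-ℓ-j) - C(2i-2ℓ,i-ℓ-j-1)) = C(2i+1,i-j)`. -/
theorem stmt_11 (i j : ℕ) :
    ∑ l ∈ Finset.range (i + 1),
        Cz (2 * l) (l : ℤ) *
          (Cz (2 * i - 2 * l) ((i : ℤ) - l - j) - Cz (2 * i - 2 * l) ((i : ℤ) - l - j - 1)) =
      Cz (2 * i + 1) ((i : ℤ) - j) := by
  rw [← centralBinomConvBallot_eq i (Int.natCast_nonneg j), centralBinomConvBallot,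
    Nat.sum_antidiagonal_eq_sum_range_succ_mk]
  refine sum_congr rfl fun l hl => ?_
  have hli : l ≤ i := Nat.lt_succ_iff.mp (mem_range.mp hl)
  rw [Cz_two_mul_self, ballot, Nat.mul_sub, Nat.cast_sub hli]
end
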